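/- arXiv:1411.7443 — 3 statements merged into one kernel-verified Lean document; each statement's English description precedes it below -/
import Mathlib

section
/- Let L be an n×n graph Laplacian, let α > 0, and let N : ℝⁿ → ℝ be any norm. Then the function d_sps(r,s) := ∫₀^∞ e^{−t} · N(e^{−αLt}(r − s)) dt is a metric on ℝⁿ: it is symmetric, it vanishes if and only if r = s, and it satisfies the triangle inequality d_sps(r,s) ≤ d_sps(r,z) + d_sps(z,s) for all r, s, z ∈ ℝⁿ. -/
open Matrix MeasureTheory

/-- A graph Laplacian: real symmetric matrix with nonpositive off-diagonal entries
whose rows each sum to zero. -/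
def IsGraphLaplacian {n : ℕ} (L : Matrix (Fin n) (Fin n) ℝ) : Prop :=
  L.IsSymm ∧ (∀ i j, i ≠ j → L i j ≤ 0) ∧ ∀ i, ∑ j, L i j = 0

/-- `N` is a norm on `ℝⁿ`. -/
structure IsNorm {n : ℕ} (N : (Fin n → ℝ) → ℝ) : Prop where
  nonneg : ∀ v, 0 ≤ N v
  eq_zero_iff : ∀ v, N v = 0 ↔ v = 0
  smul : ∀ (β : ℝ) (v), N (β • v) = |β| * N v
  add_le : ∀ v w, N (v + w) ≤ N v + N w

/-- The superposition distance
`d_sps(r,s) := ∫₀^∞ e^{−t} ⬝ N(e^{−αLt} (r − s)) dt`. -/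
noncomputable def spsDist {n : ℕ} (L : Matrix (Fin n) (Fin n) ℝ) (α : ℝ)
    (N : (Fin n → ℝ) → ℝ) (r s : Fin n → ℝ) : ℝ :=
  ∫ t in Set.Ioi (0 : ℝ), Real.exp (-t) * N ((NormedSpace.exp ((-(α * t)) • L)).mulVec (r - s))


/-! For `t ≥ 0` the heat kernel `e^{−αLt}` of a graph Laplacian is row-stochastic: the
off-diagonal entries of `−αtL` are nonnegative, and its rows sum to zero, so `e^{−αtL} 1 = 1`.
Hence it contracts the sup norm, and since `N` is bounded by a multiple of the sup norm the
integrand is at most `C ‖r − s‖ e^{−t}`, which makes every integral finite. Symmetry and the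
triangle inequality then hold pointwise under the integral, and `e^{−αLt}` is invertible, so for
`r ≠ s` the integrand is strictly positive. -/

namespace Matrix

variable {ι : Type*} [Fintype ι] [DecidableEq ι]

attribute [local instance] Matrix.linftyOpNormedRing Matrix.linftyOpNormedAlgebra

@[fun_prop]
theorem continuous_exp : Continuous (NormedSpace.exp : Matrix ι ι ℝ → Matrix ι ι ℝ) :=
  NormedSpace.exp_continuous

theorem exp_mulVec_of_mulVec_eq_zero {A : Matrix ι ι ℝ} {v : ι → ℝ} (hA : A *ᵥ v = 0) :
    NormedSpace.exp A *ᵥ v = v := by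
  have hpow : ∀ k, k ≠ 0 → A ^ k *ᵥ v = 0 := by
    rintro (_ | k) hk
    · exact absurd rfl hk
    · rw [pow_succ, ← mulVec_mulVec, hA, mulVec_zero]
  have hs := (NormedSpace.exp_series_hasSum_exp' (𝕂 := ℝ) A).map
    (mulVec.addMonoidHomLeft v) (continuous_id.matrix_mulVec continuous_const)
  refine hs.unique ((hasSum_ite_eq 0 v).congr_fun fun k => ?_)
  rcases eq_or_ne k 0 with rfl | hk
  · simp [mulVec.addMonoidHomLeft]
  · simp [mulVec.addMonoidHomLeft, hk, smul_mulVec, hpow k hk]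

theorem exp_apply_nonneg_of_nonneg {A : Matrix ι ι ℝ} (hA : ∀ i j, 0 ≤ A i j) (i j : ι) :
    0 ≤ NormedSpace.exp A i j :=
  hasSum_le (fun k => mul_nonneg (by positivity) (pow_apply_nonneg hA k i j)) hasSum_zero
    (Pi.hasSum.1 (Pi.hasSum.1 (NormedSpace.exp_series_hasSum_exp' (𝕂 := ℝ) A) i) j)

theorem exp_apply_nonneg_of_offDiag_nonneg {A : Matrix ι ι ℝ}
    (hA : ∀ i j, i ≠ j → 0 ≤ A i j) (i j : ι) : 0 ≤ NormedSpace.exp A i j := by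
  -- Shifting by the scalar `c • 1` makes `A` entrywise nonnegative and costs a factor `e^{-c}`.
  set c : ℝ := ∑ k, |A k k|
  have hshift : ∀ i j, 0 ≤ (A + c • 1) i j := by
    intro i j
    rcases eq_or_ne i j with rfl | hij
    · have : |A i i| ≤ c :=
        Finset.single_le_sum (fun k _ => abs_nonneg (A k k)) (Finset.mem_univ i)
      simp only [add_apply, smul_apply, one_apply_eq, smul_eq_mul, mul_one]
      linarith [neg_abs_le (A i i)]
    · simpa [one_apply_ne hij] using hA i j hij
  have hsplit : A = (-c) • 1 + (A + c • 1) := by module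
  have hexp : NormedSpace.exp A =
      NormedSpace.exp ((-c) • (1 : Matrix ι ι ℝ)) * NormedSpace.exp (A + c • 1) := by
    conv_lhs => rw [hsplit]
    exact exp_add_of_commute _ _ ((Commute.one_left _).smul_left _)
  have hscalar : NormedSpace.exp ((-c) • (1 : Matrix ι ι ℝ)) = Real.exp (-c) • 1 := by
    rw [← Algebra.algebraMap_eq_smul_one, ← Algebra.algebraMap_eq_smul_one, Real.exp_eq_exp_ℝ,
      NormedSpace.algebraMap_exp_comm]
    rfl
  rw [hexp, hscalar, smul_one_mul, smul_apply, smul_eq_mul]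
  exact mul_nonneg (Real.exp_nonneg _) (exp_apply_nonneg_of_nonneg hshift i j)

theorem exp_mem_rowStochastic {A : Matrix ι ι ℝ} (hoff : ∀ i j, i ≠ j → 0 ≤ A i j)
    (hrow : A *ᵥ 1 = 0) : NormedSpace.exp A ∈ rowStochastic ℝ ι :=
  mem_rowStochastic.2
    ⟨exp_apply_nonneg_of_offDiag_nonneg hoff, exp_mulVec_of_mulVec_eq_zero hrow⟩

theorem norm_mulVec_le_of_mem_rowStochastic {P : Matrix ι ι ℝ} (hP : P ∈ rowStochastic ℝ ι)
    (v : ι → ℝ) : ‖P *ᵥ v‖ ≤ ‖v‖ := by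
  refine (pi_norm_le_iff_of_nonneg (norm_nonneg v)).2 fun i => ?_
  calc ‖(P *ᵥ v) i‖ = ‖∑ j, P i j * v j‖ := rfl
    _ ≤ ∑ j, P i j * ‖v‖ := by
      refine (norm_sum_le _ _).trans (Finset.sum_le_sum fun j _ => ?_)
      rw [norm_mul, Real.norm_of_nonneg (nonneg_of_mem_rowStochastic hP)]
      exact mul_le_mul_of_nonneg_left (norm_le_pi_norm v j) (nonneg_of_mem_rowStochastic hP)
    _ = ‖v‖ := by rw [← Finset.sum_mul, sum_row_of_mem_rowStochastic hP, one_mul]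

end Matrix

theorem IsGraphLaplacian.exp_neg_smul_mem_rowStochastic {n : ℕ} {L : Matrix (Fin n) (Fin n) ℝ}
    (hL : IsGraphLaplacian L) {c : ℝ} (hc : 0 ≤ c) :
    NormedSpace.exp ((-c) • L) ∈ rowStochastic ℝ (Fin n) := by
  obtain ⟨-, hoff, hrow⟩ := hL
  refine exp_mem_rowStochastic (fun i j hij => ?_) ?_
  · simpa using mul_nonneg hc (neg_nonneg.2 (hoff i j hij))
  · ext i
    simp [mulVec, dotProduct, ← Finset.mul_sum, hrow i]

namespace IsNorm

variable {n : ℕ} {N : (Fin n → ℝ) → ℝ}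

def toSeminorm (hN : IsNorm N) : Seminorm ℝ (Fin n → ℝ) :=
  Seminorm.of N hN.add_le fun β v => by rw [hN.smul, Real.norm_eq_abs]

theorem map_zero (hN : IsNorm N) : N 0 = 0 := (hN.eq_zero_iff 0).2 rfl

theorem map_neg (hN : IsNorm N) (v : Fin n → ℝ) : N (-v) = N v :=
  map_neg_eq_map hN.toSeminorm v

theorem pos (hN : IsNorm N) {v : Fin n → ℝ} (hv : v ≠ 0) : 0 < N v :=
  (hN.nonneg v).lt_of_ne' fun h => hv ((hN.eq_zero_iff v).1 h)

protected theorem continuous (hN : IsNorm N) : Continuous N :=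
  hN.toSeminorm.convexOn.locallyLipschitz.continuous

end IsNorm

section SuperpositionDistance

open Set

variable {n : ℕ} {L : Matrix (Fin n) (Fin n) ℝ} {α : ℝ} {N : (Fin n → ℝ) → ℝ}

theorem integrableOn_spsDist_integrand (hL : IsGraphLaplacian L) (hα : 0 ≤ α) (hN : IsNorm N)
    (v : Fin n → ℝ) :
    IntegrableOn (fun t => Real.exp (-t) * N (NormedSpace.exp ((-(α * t)) • L) *ᵥ v))
      (Ioi 0) := by
  obtain ⟨C, hC0, hC⟩ := hN.toSeminorm.bound_of_continuous_normedSpace hN.continuous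
  have hNc := hN.continuous
  have hcont :
      Continuous fun t => Real.exp (-t) * N (NormedSpace.exp ((-(α * t)) • L) *ᵥ v) := by
    fun_prop
  refine ((exp_neg_integrableOn_Ioi 0 one_pos).const_mul (C * ‖v‖)).mono'
    hcont.aestronglyMeasurable.restrict ?_
  filter_upwards [ae_restrict_mem measurableSet_Ioi] with t (ht : 0 < t)
  have hP := hL.exp_neg_smul_mem_rowStochastic (mul_nonneg hα ht.le)
  rw [norm_mul, Real.norm_of_nonneg (Real.exp_nonneg _), Real.norm_of_nonneg (hN.nonneg _),
    neg_one_mul, mul_comm]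
  gcongr
  exact (hC _).trans (by gcongr; exact norm_mulVec_le_of_mem_rowStochastic hP v)

theorem spsDist_comm (hN : IsNorm N) (r s : Fin n → ℝ) :
    spsDist L α N r s = spsDist L α N s r := by
  simp only [spsDist, ← neg_sub r s, mulVec_neg, hN.map_neg]

theorem spsDist_self (hN : IsNorm N) (r : Fin n → ℝ) : spsDist L α N r r = 0 := by
  simp [spsDist, hN.map_zero]

theorem spsDist_pos (hL : IsGraphLaplacian L) (hα : 0 ≤ α) (hN : IsNorm N) {r s : Fin n → ℝ}
    (hrs : r ≠ s) : 0 < spsDist L α N r s := by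
  have hinj : ∀ t : ℝ, Function.Injective (NormedSpace.exp ((-(α * t)) • L) *ᵥ ·) :=
    fun t => mulVec_injective_iff_isUnit.2 (Matrix.isUnit_exp _)
  have hpos : ∀ t, 0 < Real.exp (-t) * N (NormedSpace.exp ((-(α * t)) • L) *ᵥ (r - s)) :=
    fun t => mul_pos (Real.exp_pos _) (hN.pos fun h => hrs (sub_eq_zero.1
      (hinj t (h.trans (mulVec_zero _).symm))))
  rw [spsDist, setIntegral_pos_iff_support_of_nonneg_ae
    (.of_forall fun t => (hpos t).le) (integrableOn_spsDist_integrand hL hα hN _),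
    Function.support_eq_univ fun t => (hpos t).ne', univ_inter, Real.volume_Ioi]
  exact ENNReal.zero_lt_top

theorem spsDist_triangle (hL : IsGraphLaplacian L) (hα : 0 ≤ α) (hN : IsNorm N)
    (r s z : Fin n → ℝ) : spsDist L α N r s ≤ spsDist L α N r z + spsDist L α N z s := by
  have hint := integrableOn_spsDist_integrand hL hα hN
  rw [spsDist, spsDist, spsDist, ← integral_add (hint _) (hint _)]
  refine integral_mono (hint _) ((hint _).add (hint _)) fun t => ?_
  dsimp only
  rw [← mul_add, ← sub_add_sub_cancel r z s, mulVec_add]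
  exact mul_le_mul_of_nonneg_left (hN.add_le _ _) (Real.exp_nonneg _)

end SuperpositionDistance

theorem spsDist_isMetric {n : ℕ} (L : Matrix (Fin n) (Fin n) ℝ) (hL : IsGraphLaplacian L)
    (α : ℝ) (hα : 0 < α) (N : (Fin n → ℝ) → ℝ) (hN : IsNorm N) :
    (∀ r s : Fin n → ℝ, spsDist L α N r s = spsDist L α N s r) ∧
    (∀ r s : Fin n → ℝ, spsDist L α N r s = 0 ↔ r = s) ∧
    (∀ r s z : Fin n → ℝ, spsDist L α N r s ≤ spsDist L α N r z + spsDist L α N z s) :=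
  ⟨spsDist_comm hN,
    fun _ _ => ⟨not_imp_not.1 fun hrs => (spsDist_pos hL hα.le hN hrs).ne',
      fun h => h ▸ spsDist_self hN _⟩,
    spsDist_triangle hL hα.le hN⟩
end

section
/- Let L be an n×n graph Laplacian and E an n×n real matrix such that L' = L + E is also a graph Laplacian, let p ∈ {1, 2, ∞}, and suppose ‖E‖_p ≤ ε‖L‖_p < 1 for some ε > 0, where ‖·‖_p is the operator norm induced by the vector ℓp norm. Let s, r ∈ ℝⁿ satisfy ‖s‖_p ≤ γ and ‖r‖_p ≤ γ. Then the diffusion distances (with α = 1 and input norm ℓp) computed on L and on L' satisfy |d_diff^{L'}(s,r) − d_diff^{L}(s,r)| ≤ 2γ · ε‖L‖_p / (1 − ε‖L‖_p); in particular the difference is 2γ‖L‖_p ε + o(ε) as ε → 0. -/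
/-!
For a graph Laplacian `L`, the map `I + L` does not shrink the ℓ¹, ℓ² or ℓ^∞ norm. For ℓ² this is
positive semidefiniteness, `2 yᵀ L y = ∑ᵢⱼ (-Lᵢⱼ) (yᵢ - yⱼ)² ≥ 0`. For ℓ^∞ and ℓ¹ it is a discrete
maximum principle: `(L c)ⱼ = ∑ᵢ Lⱼᵢ (cᵢ - cⱼ)` has the sign of `cⱼ` wherever `|c|` is maximal;
apply it to `y` at a maximal coordinate for ℓ^∞, and (by symmetry of `L`) to the sign vector of `y`
for ℓ¹. So both resolvents `(I + L)⁻¹` and `(I + L + E)⁻¹` are ℓp-contractions, and the resolvent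
identity `(I + L + E)⁻¹ - (I + L)⁻¹ = -(I + L + E)⁻¹ E (I + L)⁻¹` bounds the change of the diffusion
distance by `‖E‖_p ‖s - r‖_p ≤ 2 γ ε ‖L‖_p`, which is already below the stated bound.
-/

open Matrix

/-- The ℓp norm of a vector in `ℝⁿ`. -/
noncomputable def lpNorm (p : ENNReal) [Fact (1 ≤ p)] {n : ℕ} (x : Fin n → ℝ) : ℝ :=
  ‖(WithLp.equiv p (Fin n → ℝ)).symm x‖

/-- The operator norm on matrices induced by the vector ℓp norm:
`‖M‖_p := sup {‖Mx‖_p : ‖x‖_p = 1}`. -/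
noncomputable def lpOpNorm (p : ENNReal) [Fact (1 ≤ p)] {n : ℕ}
    (M : Matrix (Fin n) (Fin n) ℝ) : ℝ :=
  sSup ((fun x => lpNorm p (M.mulVec x)) '' {x : Fin n → ℝ | lpNorm p x = 1})

/-- The diffusion distance with diffusion constant `α = 1` and input norm ℓp:
`d_diff^L(s,r) := ‖(I + L)⁻¹ (s − r)‖_p`. -/
noncomputable def diffDistP (p : ENNReal) [Fact (1 ≤ p)] {n : ℕ}
    (L : Matrix (Fin n) (Fin n) ℝ) (s r : Fin n → ℝ) : ℝ :=
  lpNorm p ((1 + L)⁻¹.mulVec (s - r))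

open WithLp

section lpNorm

variable {p : ENNReal} [Fact (1 ≤ p)] {n : ℕ}

lemma lpNorm_eq_norm_toLp (x : Fin n → ℝ) : lpNorm p x = ‖toLp p x‖ := rfl

lemma lpNorm_nonneg (x : Fin n → ℝ) : 0 ≤ lpNorm p x := norm_nonneg _

@[simp]
lemma lpNorm_eq_zero {x : Fin n → ℝ} : lpNorm p x = 0 ↔ x = 0 := by
  simp [lpNorm_eq_norm_toLp]

@[simp]
lemma lpNorm_zero : lpNorm p (0 : Fin n → ℝ) = 0 := lpNorm_eq_zero.2 rfl

@[simp]
lemma lpNorm_neg (x : Fin n → ℝ) : lpNorm p (-x) = lpNorm p x := by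
  simp [lpNorm_eq_norm_toLp]

lemma lpNorm_smul (c : ℝ) (x : Fin n → ℝ) : lpNorm p (c • x) = |c| * lpNorm p x := by
  simp [lpNorm_eq_norm_toLp, norm_smul]

lemma lpNorm_sub_le (x y : Fin n → ℝ) : lpNorm p (x - y) ≤ lpNorm p x + lpNorm p y := by
  simpa [lpNorm_eq_norm_toLp] using norm_sub_le (toLp p x) (toLp p y)

lemma abs_lpNorm_sub_lpNorm_le (x y : Fin n → ℝ) :
    |lpNorm p x - lpNorm p y| ≤ lpNorm p (x - y) := by
  simpa [lpNorm_eq_norm_toLp] using abs_norm_sub_norm_le (toLp p x) (toLp p y)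

end lpNorm

lemma lpNorm_one_eq {n : ℕ} (x : Fin n → ℝ) : lpNorm 1 x = ∑ i, |x i| := by
  rw [lpNorm_eq_norm_toLp, PiLp.norm_eq_sum (by norm_num)]
  simp

lemma lpNorm_top_eq {n : ℕ} (x : Fin n → ℝ) : lpNorm ⊤ x = ‖x‖ := PiLp.norm_toLp x

namespace IsGraphLaplacian

variable {n : ℕ} {L : Matrix (Fin n) (Fin n) ℝ}

lemma mulVec_apply_eq_sum_sub (hL : IsGraphLaplacian L) (y : Fin n → ℝ) (i : Fin n) :
    (L *ᵥ y) i = ∑ j, L i j * (y j - y i) := by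
  simp only [mulVec, dotProduct, mul_sub, Finset.sum_sub_distrib, ← Finset.sum_mul, hL.2.2 i,
    zero_mul, sub_zero]

lemma mulVec_apply_mul_self_nonneg (hL : IsGraphLaplacian L) {c : Fin n → ℝ} {j : Fin n}
    (hj : ∀ i, |c i| ≤ |c j|) : 0 ≤ (L *ᵥ c) j * c j := by
  rw [hL.mulVec_apply_eq_sum_sub, Finset.sum_mul]
  refine Finset.sum_nonneg fun i _ => ?_
  rcases eq_or_ne j i with rfl | hji
  · simp
  have hcij : c i * c j ≤ c j * c j := by
    calc c i * c j ≤ |c i| * |c j| := by rw [← abs_mul]; exact le_abs_self _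
      _ ≤ |c j| * |c j| := mul_le_mul_of_nonneg_right (hj i) (abs_nonneg _)
      _ = c j * c j := abs_mul_abs_self _
  rw [mul_assoc]
  exact mul_nonneg_of_nonpos_of_nonpos (hL.2.1 j i hji) (by linarith [sub_mul (c i) (c j) (c j)])

lemma dotProduct_mulVec_self_nonneg (hL : IsGraphLaplacian L) (y : Fin n → ℝ) :
    0 ≤ y ⬝ᵥ (L *ᵥ y) := by
  have hS : y ⬝ᵥ (L *ᵥ y) = ∑ i, ∑ j, L i j * (y i * (y j - y i)) := by
    simp only [dotProduct, hL.mulVec_apply_eq_sum_sub, Finset.mul_sum]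
    refine Finset.sum_congr rfl fun i _ => Finset.sum_congr rfl fun j _ => by ring
  have hS_swap : ∑ i, ∑ j, L i j * (y i * (y j - y i)) =
      ∑ i, ∑ j, L i j * (y j * (y i - y j)) := by
    rw [Finset.sum_comm]
    simp only [hL.1.apply]
  have h2S :
      y ⬝ᵥ (L *ᵥ y) + y ⬝ᵥ (L *ᵥ y) = ∑ i, ∑ j, -L i j * (y i - y j) ^ 2 := by
    nth_rewrite 2 [hS]
    rw [hS_swap, hS, ← Finset.sum_add_distrib]
    refine Finset.sum_congr rfl fun i _ => ?_
    rw [← Finset.sum_add_distrib]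
    exact Finset.sum_congr rfl fun j _ => by ring
  have hsum : 0 ≤ ∑ i, ∑ j, -L i j * (y i - y j) ^ 2 := by
    refine Finset.sum_nonneg fun i _ => Finset.sum_nonneg fun j _ => ?_
    rcases eq_or_ne i j with rfl | hij
    · simp
    · exact mul_nonneg (neg_nonneg.2 (hL.2.1 i j hij)) (sq_nonneg _)
  linarith

lemma lpNorm_one_le (hL : IsGraphLaplacian L) (y : Fin n → ℝ) :
    lpNorm 1 y ≤ lpNorm 1 ((1 + L) *ᵥ y) := by
  set c : Fin n → ℝ := fun i => SignType.sign (y i)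
  have hc_abs : ∀ i, |c i| ≤ 1 := fun i => by
    rcases lt_trichotomy (y i) 0 with h | h | h <;> simp [c, h]
  have hLc : 0 ≤ c ⬝ᵥ (L *ᵥ y) := by
    rw [dotProduct_mulVec, ← mulVec_transpose, hL.1]
    refine Finset.sum_nonneg fun j _ => ?_
    rcases eq_or_ne (y j) 0 with h | h
    · simp [h]
    have hcj : |c j| = 1 := by rcases h.lt_or_gt with h | h <;> simp [c, h]
    have := hL.mulVec_apply_mul_self_nonneg (j := j) fun i => hcj ▸ hc_abs i
    calc (0 : ℝ) ≤ (L *ᵥ c) j * c j * |y j| := mul_nonneg this (abs_nonneg _)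
      _ = (L *ᵥ c) j * y j := by rw [mul_assoc, sign_mul_abs]
  calc lpNorm 1 y = c ⬝ᵥ y := by simp [lpNorm_one_eq, dotProduct, c]
    _ ≤ c ⬝ᵥ ((1 + L) *ᵥ y) := by
      simp only [add_mulVec, one_mulVec, dotProduct_add]
      linarith
    _ ≤ lpNorm 1 ((1 + L) *ᵥ y) := by
      rw [lpNorm_one_eq]
      refine Finset.sum_le_sum fun i _ => ?_
      calc c i * ((1 + L) *ᵥ y) i ≤ |c i| * |((1 + L) *ᵥ y) i| := by
            rw [← abs_mul]; exact le_abs_self _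
        _ ≤ |((1 + L) *ᵥ y) i| := mul_le_of_le_one_left (abs_nonneg _) (hc_abs i)

lemma lpNorm_two_le (hL : IsGraphLaplacian L) (y : Fin n → ℝ) :
    lpNorm 2 y ≤ lpNorm 2 ((1 + L) *ᵥ y) := by
  have hexpand : lpNorm 2 ((1 + L) *ᵥ y) ^ 2 =
      lpNorm 2 y ^ 2 + 2 * (y ⬝ᵥ (L *ᵥ y)) + lpNorm 2 (L *ᵥ y) ^ 2 := by
    simp only [lpNorm_eq_norm_toLp, add_mulVec, one_mulVec, toLp_add, norm_add_sq_real,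
      EuclideanSpace.inner_toLp_toLp, star_trivial, dotProduct_comm]
  refine (pow_le_pow_iff_left₀ (lpNorm_nonneg _) (lpNorm_nonneg _) two_ne_zero).1 ?_
  nlinarith [hL.dotProduct_mulVec_self_nonneg y]

lemma lpNorm_top_le (hL : IsGraphLaplacian L) (y : Fin n → ℝ) :
    lpNorm ⊤ y ≤ lpNorm ⊤ ((1 + L) *ᵥ y) := by
  rcases isEmpty_or_nonempty (Fin n) with hn | hn
  · simp [Subsingleton.elim y 0]
  obtain ⟨j, -, hj⟩ := Finset.exists_max_image Finset.univ (fun i => |y i|) Finset.univ_nonempty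
  have hj : ∀ i, |y i| ≤ |y j| := fun i => hj i (Finset.mem_univ i)
  have hyj : |y j| ≤ |((1 + L) *ᵥ y) j| := by
    rcases (abs_nonneg (y j)).eq_or_lt with h0 | hpos
    · exact h0 ▸ abs_nonneg _
    refine le_of_mul_le_mul_right ?_ hpos
    have := hL.mulVec_apply_mul_self_nonneg hj
    calc |y j| * |y j| = y j * y j := abs_mul_abs_self _
      _ ≤ ((1 + L) *ᵥ y) j * y j := by
        simp only [add_mulVec, one_mulVec, Pi.add_apply]
        linarith
      _ ≤ |((1 + L) *ᵥ y) j| * |y j| := by rw [← abs_mul]; exact le_abs_self _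
  rw [lpNorm_top_eq, lpNorm_top_eq, pi_norm_le_iff_of_nonneg (norm_nonneg _)]
  exact fun i => (hj i).trans (hyj.trans (norm_le_pi_norm ((1 + L) *ᵥ y) j))

lemma lpNorm_le_lpNorm_one_add_mulVec (hL : IsGraphLaplacian L) {p : ENNReal} [Fact (1 ≤ p)]
    (hp : p = 1 ∨ p = 2 ∨ p = ⊤) (y : Fin n → ℝ) :
    lpNorm p y ≤ lpNorm p ((1 + L) *ᵥ y) := by
  rcases hp with rfl | rfl | rfl
  exacts [hL.lpNorm_one_le y, hL.lpNorm_two_le y, hL.lpNorm_top_le y]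

lemma isUnit_det_one_add (hL : IsGraphLaplacian L) : IsUnit (1 + L).det := by
  rw [isUnit_iff_ne_zero]
  intro hdet
  obtain ⟨y, hy0, hy⟩ := exists_mulVec_eq_zero_iff.2 hdet
  have := hL.lpNorm_two_le y
  rw [hy, lpNorm_zero] at this
  exact hy0 (lpNorm_eq_zero.1 (this.antisymm (lpNorm_nonneg y)))

lemma lpNorm_inv_mulVec_le (hL : IsGraphLaplacian L) {p : ENNReal} [Fact (1 ≤ p)]
    (hp : p = 1 ∨ p = 2 ∨ p = ⊤) (x : Fin n → ℝ) :
    lpNorm p ((1 + L)⁻¹ *ᵥ x) ≤ lpNorm p x := by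
  have := hL.lpNorm_le_lpNorm_one_add_mulVec hp ((1 + L)⁻¹ *ᵥ x)
  rwa [mulVec_mulVec, mul_nonsing_inv _ hL.isUnit_det_one_add, one_mulVec] at this

end IsGraphLaplacian

section lpOpNorm

variable {p : ENNReal} [Fact (1 ≤ p)] {n : ℕ} (M : Matrix (Fin n) (Fin n) ℝ)

lemma lpOpNorm_nonneg : 0 ≤ lpOpNorm p M :=
  Real.sSup_nonneg (by rintro _ ⟨x, -, rfl⟩; exact lpNorm_nonneg _)

lemma lpNorm_mulVec_le (x : Fin n → ℝ) : lpNorm p (M *ᵥ x) ≤ lpOpNorm p M * lpNorm p x := by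
  set T := (toLpLin p p M).toContinuousLinearMap
  have hT : ∀ x, lpNorm p (M *ᵥ x) ≤ ‖T‖ * lpNorm p x := fun x => T.le_opNorm (toLp p x)
  have hbdd : BddAbove ((fun x => lpNorm p (M *ᵥ x)) '' {x | lpNorm p x = 1}) :=
    ⟨‖T‖, by
      rintro _ ⟨x, hx, rfl⟩
      exact (hT x).trans_eq (by rw [show lpNorm p x = 1 from hx, mul_one])⟩
  rcases eq_or_ne x 0 with rfl | hx
  · simp
  have hpos : 0 < lpNorm p x := (lpNorm_nonneg x).lt_of_ne' (lpNorm_eq_zero.not.2 hx)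
  have hunit : lpNorm p ((lpNorm p x)⁻¹ • x) = 1 := by
    rw [lpNorm_smul, abs_inv, abs_of_pos hpos, inv_mul_cancel₀ hpos.ne']
  have : lpNorm p (M *ᵥ ((lpNorm p x)⁻¹ • x)) ≤ lpOpNorm p M := le_csSup hbdd ⟨_, hunit, rfl⟩
  rwa [mulVec_smul, lpNorm_smul, abs_inv, abs_of_pos hpos, inv_mul_le_iff₀ hpos, mul_comm] at this

end lpOpNorm

lemma inv_sub_inv_of_isUnit_det {m R : Type*} [Fintype m] [DecidableEq m] [CommRing R]
    {A B : Matrix m m R} (hA : IsUnit A.det) (hB : IsUnit B.det) :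
    B⁻¹ - A⁻¹ = B⁻¹ * (A - B) * A⁻¹ := by
  rw [mul_sub, sub_mul, nonsing_inv_mul _ hB, one_mul, mul_assoc, mul_nonsing_inv _ hA, mul_one]

lemma abs_diffDistP_add_sub_diffDistP_le {n : ℕ} {L E : Matrix (Fin n) (Fin n) ℝ}
    (hL : IsGraphLaplacian L) (hL' : IsGraphLaplacian (L + E)) {p : ENNReal} [Fact (1 ≤ p)]
    (hp : p = 1 ∨ p = 2 ∨ p = ⊤) (s r : Fin n → ℝ) :
    |diffDistP p (L + E) s r - diffDistP p L s r| ≤ lpOpNorm p E * lpNorm p (s - r) := by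
  have hresolvent : (1 + (L + E))⁻¹ - (1 + L)⁻¹ = -((1 + (L + E))⁻¹ * E * (1 + L)⁻¹) := by
    rw [inv_sub_inv_of_isUnit_det hL.isUnit_det_one_add hL'.isUnit_det_one_add]
    noncomm_ring
  calc _ ≤ lpNorm p ((1 + (L + E))⁻¹ *ᵥ (s - r) - (1 + L)⁻¹ *ᵥ (s - r)) :=
        abs_lpNorm_sub_lpNorm_le _ _
    _ = lpNorm p ((1 + (L + E))⁻¹ *ᵥ (E *ᵥ ((1 + L)⁻¹ *ᵥ (s - r)))) := by
      rw [← sub_mulVec, hresolvent, neg_mulVec, lpNorm_neg, mulVec_mulVec, mulVec_mulVec]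
    _ ≤ lpNorm p (E *ᵥ ((1 + L)⁻¹ *ᵥ (s - r))) := hL'.lpNorm_inv_mulVec_le hp _
    _ ≤ lpOpNorm p E * lpNorm p ((1 + L)⁻¹ *ᵥ (s - r)) := lpNorm_mulVec_le E _
    _ ≤ lpOpNorm p E * lpNorm p (s - r) :=
      mul_le_mul_of_nonneg_left (hL.lpNorm_inv_mulVec_le hp _) (lpOpNorm_nonneg E)

theorem diffDist_stability_general {n : ℕ} (L E : Matrix (Fin n) (Fin n) ℝ)
    (hL : IsGraphLaplacian L) (hL' : IsGraphLaplacian (L + E))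
    (p : ENNReal) [Fact (1 ≤ p)] (hp : p = 1 ∨ p = 2 ∨ p = ⊤)
    (ε γ : ℝ)
    (hE : lpOpNorm p E ≤ ε * lpOpNorm p L) (hsmall : ε * lpOpNorm p L < 1)
    (s r : Fin n → ℝ) (hs : lpNorm p s ≤ γ) (hr : lpNorm p r ≤ γ) :
    |diffDistP p (L + E) s r - diffDistP p L s r| ≤
      2 * γ * (ε * lpOpNorm p L) / (1 - ε * lpOpNorm p L) := by
  set η := ε * lpOpNorm p L
  have hη : 0 ≤ η := (lpOpNorm_nonneg (p := p) E).trans hE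
  have hγ : 0 ≤ γ := (lpNorm_nonneg s).trans hs
  have hsr : lpNorm p (s - r) ≤ 2 * γ := (lpNorm_sub_le s r).trans (by linarith)
  calc _ ≤ lpOpNorm p E * lpNorm p (s - r) := abs_diffDistP_add_sub_diffDistP_le hL hL' hp s r
    _ ≤ η * (2 * γ) := mul_le_mul hE hsr (lpNorm_nonneg _) hη
    _ ≤ 2 * γ * η / (1 - η) := by
      rw [le_div_iff₀ (by linarith)]
      nlinarith [mul_nonneg (mul_nonneg hγ hη) hη]

theorem diffDist_stability {n : ℕ} (L E : Matrix (Fin n) (Fin n) ℝ)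
    (hL : IsGraphLaplacian L) (hL' : IsGraphLaplacian (L + E))
    (p : ENNReal) [Fact (1 ≤ p)] (hp : p = 1 ∨ p = 2 ∨ p = ⊤)
    (ε γ : ℝ) (hε : 0 < ε)
    (hE : lpOpNorm p E ≤ ε * lpOpNorm p L) (hsmall : ε * lpOpNorm p L < 1)
    (s r : Fin n → ℝ) (hs : lpNorm p s ≤ γ) (hr : lpNorm p r ≤ γ) :
    |diffDistP p (L + E) s r - diffDistP p L s r| ≤
      2 * γ * (ε * lpOpNorm p L) / (1 - ε * lpOpNorm p L) :=
  diffDist_stability_general L E hL hL' p hp ε γ hE hsmall s r hs hr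
end

section
/- Let L be an n×n graph Laplacian. Then I + L is invertible and its inverse (I + L)^{−1} is doubly stochastic: all entries of (I + L)^{−1} are nonnegative, and each of its rows and each of its columns sums to 1. -/
open Matrix

/-!
For a Laplacian `L`, `(L *ᵥ x) k = ∑ j, L k j * (x j - x k)` is `≤ 0` at a minimum `k` of `x`.
Hence `(1 + L) *ᵥ x ≥ 0` forces `x ≥ 0` (discrete minimum principle), so `1 + L` is injective
and `(1 + L)⁻¹` maps nonnegative vectors to nonnegative vectors; in particular its entries are
nonnegative. Since `L *ᵥ 1 = 0`, also `(1 + L)⁻¹ *ᵥ 1 = 1`, and symmetry of `L` turns row sums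
into column sums.
-/

namespace Matrix

variable {R ι : Type*} [Fintype ι]

/-- The Laplacian `D - A` of a weighted digraph, with `D` the diagonal of out-degrees. -/
structure IsRowLaplacian [AddCommMonoid R] [LE R] (L : Matrix ι ι R) : Prop where
  apply_nonpos_of_ne : ∀ ⦃i j⦄, i ≠ j → L i j ≤ 0
  sum_row_eq_zero : ∀ i, ∑ j, L i j = 0

namespace IsRowLaplacian

section Ring

variable [Ring R] [LE R] {L : Matrix ι ι R}

theorem mulVec_apply_eq_sum_mul_sub (hL : L.IsRowLaplacian) (x : ι → R) (k : ι) :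
    (L *ᵥ x) k = ∑ j, L k j * (x j - x k) := by
  simp only [mul_sub, Finset.sum_sub_distrib, ← Finset.sum_mul, hL.sum_row_eq_zero, zero_mul,
    sub_zero]
  rfl

variable [DecidableEq ι]

theorem one_add_mulVec_one (hL : L.IsRowLaplacian) : (1 + L) *ᵥ 1 = 1 := by
  ext i
  simp [add_mulVec, hL.mulVec_apply_eq_sum_mul_sub]

end Ring

section OrderedRing

variable [Ring R] [LinearOrder R] [IsOrderedRing R] {L : Matrix ι ι R}

theorem mulVec_apply_nonpos_of_forall_le (hL : L.IsRowLaplacian) {x : ι → R} {k : ι}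
    (hk : ∀ j, x k ≤ x j) : (L *ᵥ x) k ≤ 0 := by
  rw [hL.mulVec_apply_eq_sum_mul_sub]
  refine Finset.sum_nonpos fun j _ => ?_
  rcases eq_or_ne k j with rfl | hkj
  · simp
  · exact mul_nonpos_of_nonpos_of_nonneg (hL.apply_nonpos_of_ne hkj) (sub_nonneg.2 (hk j))

variable [DecidableEq ι]

theorem nonneg_of_one_add_mulVec_nonneg (hL : L.IsRowLaplacian) {x : ι → R}
    (hx : 0 ≤ (1 + L) *ᵥ x) : 0 ≤ x := by
  intro i
  rw [Pi.zero_apply]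
  have : Nonempty ι := ⟨i⟩
  obtain ⟨k, hk⟩ := Finite.exists_min x
  have hxk : 0 ≤ x k + (L *ᵥ x) k := by simpa [add_mulVec] using hx k
  have hLxk : (L *ᵥ x) k ≤ 0 := hL.mulVec_apply_nonpos_of_forall_le hk
  exact (hxk.trans (add_le_of_nonpos_right hLxk)).trans (hk i)

end OrderedRing

section Field

variable [Field R] [LinearOrder R] [IsStrictOrderedRing R] [DecidableEq ι] {L : Matrix ι ι R}

theorem isUnit_one_add (hL : L.IsRowLaplacian) : IsUnit (1 + L) := by
  refine mulVec_injective_iff_isUnit.1 fun x y hxy => ?_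
  have hsub : (1 + L) *ᵥ (x - y) = 0 := by rw [mulVec_sub, hxy, sub_self]
  have hle : 0 ≤ x - y := hL.nonneg_of_one_add_mulVec_nonneg hsub.ge
  have hge : 0 ≤ y - x := hL.nonneg_of_one_add_mulVec_nonneg <| by
    rw [← neg_sub, mulVec_neg, hsub, neg_zero]
  exact le_antisymm (sub_nonneg.1 hge) (sub_nonneg.1 hle)

theorem isUnit_det_one_add (hL : L.IsRowLaplacian) : IsUnit (1 + L).det :=
  (isUnit_iff_isUnit_det _).1 hL.isUnit_one_add

theorem inv_one_add_mulVec_nonneg (hL : L.IsRowLaplacian) {v : ι → R} (hv : 0 ≤ v) :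
    0 ≤ (1 + L)⁻¹ *ᵥ v := by
  refine hL.nonneg_of_one_add_mulVec_nonneg ?_
  rwa [mulVec_mulVec, mul_nonsing_inv _ hL.isUnit_det_one_add, one_mulVec]

theorem inv_one_add_mem_rowStochastic (hL : L.IsRowLaplacian) :
    (1 + L)⁻¹ ∈ rowStochastic R ι := by
  refine ⟨fun i j => ?_, ?_⟩
  · have hej : (0 : ι → R) ≤ Pi.single j 1 := Pi.single_nonneg.2 zero_le_one
    simpa [mulVec_single_one] using hL.inv_one_add_mulVec_nonneg hej i
  · conv_lhs => rw [← hL.one_add_mulVec_one]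
    rw [mulVec_mulVec, nonsing_inv_mul _ hL.isUnit_det_one_add, one_mulVec]

theorem inv_one_add_mem_doublyStochastic (hL : L.IsRowLaplacian) (hsymm : L.IsSymm) :
    (1 + L)⁻¹ ∈ doublyStochastic R ι := by
  obtain ⟨hnonneg, hrow⟩ := hL.inv_one_add_mem_rowStochastic
  have hinv_symm : (1 + L)⁻¹ᵀ = (1 + L)⁻¹ := by
    rw [transpose_nonsing_inv, transpose_add, transpose_one, hsymm.eq]
  refine ⟨hnonneg, hrow, ?_⟩
  rw [← mulVec_transpose, hinv_symm, hrow]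

end Field

end IsRowLaplacian

end Matrix

theorem IsGraphLaplacian.isRowLaplacian {n : ℕ} {L : Matrix (Fin n) (Fin n) ℝ}
    (hL : IsGraphLaplacian L) : L.IsRowLaplacian :=
  ⟨hL.2.1, hL.2.2⟩

theorem inv_one_add_laplacian_doublyStochastic {n : ℕ} (L : Matrix (Fin n) (Fin n) ℝ)
    (hL : IsGraphLaplacian L) :
    IsUnit (1 + L) ∧
    (∀ i j, 0 ≤ (1 + L)⁻¹ i j) ∧
    (∀ i, ∑ j, (1 + L)⁻¹ i j = 1) ∧
    (∀ j, ∑ i, (1 + L)⁻¹ i j = 1) :=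
  ⟨hL.isRowLaplacian.isUnit_one_add,
    mem_doublyStochastic_iff_sum.1 (hL.isRowLaplacian.inv_one_add_mem_doublyStochastic hL.1)⟩
end
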